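/- arXiv:1711.04715 — 8 statements merged into one kernel-verified Lean document; each statement's English description precedes it below -/
import Mathlib

section
/- For every proper subset S ⊊ V, the equilibrium equation (Δν)_i = 1 for i ∈ S and ν_i = 0 for i ∈ V \ S has a unique solution ν^S; moreover ν^S is nonnegative and its support equals S. -/
open Finset

noncomputable def gdeg {V : Type*} [Fintype V] (ω : V → V → ℝ) (i : V) : ℝ := ∑ j, ω i j

noncomputable def gLap {V : Type*} [Fintype V] (ω : V → V → ℝ) (r : ℝ) (u : V → ℝ) (i : V) : ℝ :=
  (gdeg ω i) ^ (-r) * ∑ j, ω i j * (u i - u j)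

noncomputable def gMass {V : Type*} [Fintype V] (ω : V → V → ℝ) (r : ℝ) (u : V → ℝ) : ℝ :=
  ∑ i, (gdeg ω i) ^ r * u i

noncomputable def gInner {V : Type*} [Fintype V] (ω : V → V → ℝ) (r : ℝ) (u v : V → ℝ) : ℝ :=
  ∑ i, u i * v i * (gdeg ω i) ^ r

/-- The graph is connected: any two nodes are joined by a chain of positive-weight edges. -/
def GConn {V : Type*} (ω : V → V → ℝ) : Prop :=
  ∀ i j : V, Relation.ReflTransGen (fun a b => 0 < ω a b) i j

/-- Extension by zero of a function on `S` to all of `V`. -/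
noncomputable def extS {V : Type*} (S : Set V) [DecidablePred (· ∈ S)] (u : ↥S → ℝ) :
    V → ℝ := fun i => if h : i ∈ S then u ⟨i, h⟩ else 0

lemma extS_add {V : Type*} (S : Set V) [DecidablePred (· ∈ S)] (u v : ↥S → ℝ) :
    extS S (u + v) = extS S u + extS S v := by
  funext i; by_cases h : i ∈ S <;> simp [extS, h]

lemma extS_smul {V : Type*} (S : Set V) [DecidablePred (· ∈ S)] (c : ℝ) (u : ↥S → ℝ) :
    extS S (c • u) = c • extS S u := by
  funext i; by_cases h : i ∈ S <;> simp [extS, h]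

/-- The unnormalized Laplacian. -/
noncomputable def gL {V : Type*} [Fintype V] (ω : V → V → ℝ) (w : V → ℝ) (i : V) : ℝ :=
  ∑ j, ω i j * (w i - w j)

/-- The Dirichlet operator on `S` with zero boundary conditions. -/
noncomputable def gB {V : Type*} [Fintype V] (ω : V → V → ℝ) (S : Set V)
    [DecidablePred (· ∈ S)] : (↥S → ℝ) →ₗ[ℝ] (↥S → ℝ) where
  toFun u := fun i => gL ω (extS S u) i
  map_add' u v := by
    funext i
    simp only [extS_add, gL, Pi.add_apply]
    rw [← Finset.sum_add_distrib]
    exact Finset.sum_congr rfl fun j _ => by ring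
  map_smul' c u := by
    funext i
    simp only [extS_smul, gL, Pi.smul_apply, RingHom.id_apply, smul_eq_mul]
    rw [Finset.mul_sum]
    exact Finset.sum_congr rfl fun j _ => by ring

lemma energy_identity {V : Type*} [Fintype V] (ω : V → V → ℝ)
    (hsym : ∀ i j, ω i j = ω j i) (w : V → ℝ) :
    ∑ i, ∑ j, ω i j * (w i - w j) ^ 2 = 2 * ∑ i, w i * gL ω w i := by
  have swap : ∑ i, ∑ j, ω i j * (w j * (w j - w i))
      = ∑ i, ∑ j, ω i j * (w i * (w i - w j)) := by
    rw [Finset.sum_comm]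
    exact Finset.sum_congr rfl fun i _ => Finset.sum_congr rfl fun j _ => by rw [hsym]
  have expand : ∑ i, ∑ j, ω i j * (w i - w j) ^ 2
      = ∑ i, ∑ j, (ω i j * (w i * (w i - w j)) + ω i j * (w j * (w j - w i))) :=
    Finset.sum_congr rfl fun i _ => Finset.sum_congr rfl fun j _ => by ring
  rw [expand]
  simp only [Finset.sum_add_distrib]
  rw [swap, two_mul]
  congr 1 <;>
  · simp only [gL, Finset.mul_sum]
    exact Finset.sum_congr rfl fun i _ => Finset.sum_congr rfl fun j _ => by ring

lemma gdeg_pos {V : Type*} [Fintype V] (ω : V → V → ℝ) (hnn : ∀ i j, 0 ≤ ω i j)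
    (hconn : GConn ω) (hcard : 2 ≤ Fintype.card V) (i : V) : 0 < gdeg ω i := by
  obtain ⟨j, hj⟩ := Fintype.exists_ne_of_one_lt_card (by omega) i
  rcases (hconn i j).cases_head with h | ⟨c, hc, _⟩
  · exact absurd h.symm hj
  · have h1 : ω i c ≤ gdeg ω i :=
      Finset.single_le_sum (fun k _ => hnn i k) (Finset.mem_univ c)
    linarith

/-- Existence and uniqueness of the equilibrium measure of a proper subset; it is
nonnegative and its support equals the subset. -/
theorem equilibrium_measure_exists_unique {V : Type*} [Fintype V] (ω : V → V → ℝ) (r : ℝ)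
    (hsym : ∀ i j, ω i j = ω j i) (hnn : ∀ i j, 0 ≤ ω i j) (hloop : ∀ i, ω i i = 0)
    (hconn : GConn ω) (hcard : 2 ≤ Fintype.card V) (hr0 : 0 ≤ r) (hr1 : r ≤ 1)
    (S : Set V) (hS : S ≠ Set.univ) :
    ∃ ν : V → ℝ,
      ((∀ i ∈ S, gLap ω r ν i = 1) ∧ (∀ i ∉ S, ν i = 0)) ∧
      (∀ ν' : V → ℝ, ((∀ i ∈ S, gLap ω r ν' i = 1) ∧ (∀ i ∉ S, ν' i = 0)) → ν' = ν) ∧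
      (∀ i, 0 ≤ ν i) ∧ (∀ i, ν i ≠ 0 ↔ i ∈ S) := by
  classical
  haveI : Fintype ↥S := Fintype.ofFinite _
  have hdeg : ∀ i, 0 < gdeg ω i := gdeg_pos ω hnn hconn hcard
  set b : V → ℝ := fun i => (gdeg ω i) ^ r with hb
  have hbpos : ∀ i, 0 < b i := fun i => Real.rpow_pos_of_pos (hdeg i) r
  have hcancel : ∀ i, (gdeg ω i) ^ (-r) * (gdeg ω i) ^ r = 1 := fun i => by
    rw [← Real.rpow_add (hdeg i)]; simp
  have hgLap : ∀ (w : V → ℝ) i, gLap ω r w i = (gdeg ω i) ^ (-r) * gL ω w i :=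
    fun w i => rfl
  obtain ⟨v0, hv0⟩ := (Set.ne_univ_iff_exists_notMem S).mp hS
  -- injectivity of the Dirichlet operator
  have hkey : ∀ u : ↥S → ℝ, gB ω S u = 0 → u = 0 := by
    intro u hu
    set w := extS S u with hw
    have hw0 : ∀ i ∉ S, w i = 0 := fun i hi => dif_neg hi
    have hwL : ∀ i (hi : i ∈ S), gL ω w i = 0 := fun i hi => congrFun hu ⟨i, hi⟩
    have hQ : ∑ i, w i * gL ω w i = 0 :=
      Finset.sum_eq_zero fun i _ => by
        by_cases h : i ∈ S
        · rw [hwL i h]; ring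
        · rw [hw0 i h]; ring
    have hE : ∑ i, ∑ j, ω i j * (w i - w j) ^ 2 = 0 := by
      rw [energy_identity ω hsym w, hQ]; ring
    have hterm : ∀ i j, ω i j * (w i - w j) ^ 2 = 0 := by
      have houter := (Finset.sum_eq_zero_iff_of_nonneg
        (fun i _ => Finset.sum_nonneg fun j _ =>
          mul_nonneg (hnn i j) (sq_nonneg _))).mp hE
      intro i j
      exact (Finset.sum_eq_zero_iff_of_nonneg
        (fun j _ => mul_nonneg (hnn i j) (sq_nonneg _))).mp
        (houter i (Finset.mem_univ i)) j (Finset.mem_univ j)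
    have hedge : ∀ a c, 0 < ω a c → w a = w c := by
      intro a c h
      have h2 : (w a - w c) ^ 2 = 0 := by
        rcases mul_eq_zero.mp (hterm a c) with h' | h'
        · exact absurd h' (ne_of_gt h)
        · exact h'
      have := pow_eq_zero_iff (n := 2) (by norm_num) |>.mp h2
      linarith [this]
    have hwij : ∀ i j : V, w i = w j := by
      intro i j
      induction hconn i j with
      | refl => rfl
      | tail _ h2 ih => exact ih.trans (hedge _ _ h2)
    have hwzero : ∀ i, w i = 0 := fun i => (hwij i v0).trans (hw0 v0 hv0)
    funext i
    have h := hwzero i.1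
    rw [hw] at h
    simpa [extS, i.2] using h
  have hinj : Function.Injective (gB ω S) := by
    intro u v huv
    have := hkey (u - v) (by rw [map_sub, huv, sub_self])
    exact sub_eq_zero.mp this
  have hsurj : Function.Surjective (gB ω S) :=
    (LinearMap.injective_iff_surjective).mp hinj
  obtain ⟨u, hu⟩ := hsurj (fun i => b i.1)
  set ν := extS S u with hν
  have hν0 : ∀ i ∉ S, ν i = 0 := fun i hi => dif_neg hi
  have hνL : ∀ i (hi : i ∈ S), gL ω ν i = b i := fun i hi => congrFun hu ⟨i, hi⟩
  have hνlap : ∀ i ∈ S, gLap ω r ν i = 1 := by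
    intro i hi
    rw [hgLap, hνL i hi]
    exact hcancel i
  -- nonnegativity
  have hνnn : ∀ i, 0 ≤ ν i := by
    by_contra hcon
    push_neg at hcon
    obtain ⟨i₀, _, hmin⟩ := Finset.exists_min_image Finset.univ ν ⟨v0, Finset.mem_univ v0⟩
    obtain ⟨k, hk⟩ := hcon
    have hneg : ν i₀ < 0 := lt_of_le_of_lt (hmin k (Finset.mem_univ k)) hk
    have hi₀S : i₀ ∈ S := by
      by_contra h
      rw [hν0 i₀ h] at hneg
      exact lt_irrefl 0 hneg
    have hle : gL ω ν i₀ ≤ 0 :=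
      Finset.sum_nonpos fun j _ =>
        mul_nonpos_of_nonneg_of_nonpos (hnn i₀ j)
          (by linarith [hmin j (Finset.mem_univ j)])
    rw [hνL i₀ hi₀S] at hle
    linarith [hbpos i₀]
  -- support
  have hνsupp : ∀ i, ν i ≠ 0 ↔ i ∈ S := by
    intro i
    constructor
    · intro h
      by_contra hi
      exact h (hν0 i hi)
    · intro hi h
      have hle : gL ω ν i ≤ 0 := by
        apply Finset.sum_nonpos
        intro j _
        rw [h]
        have : (0 : ℝ) - ν j ≤ 0 := by linarith [hνnn j]
        exact mul_nonpos_of_nonneg_of_nonpos (hnn i j) this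
      rw [hνL i hi] at hle
      linarith [hbpos i]
  refine ⟨ν, ⟨hνlap, hν0⟩, ?_, hνnn, hνsupp⟩
  -- uniqueness
  rintro ν' ⟨hν'lap, hν'0⟩
  set u' : ↥S → ℝ := fun i => ν' i.1 with hu'
  have heu' : extS S u' = ν' := by
    funext i
    by_cases h : i ∈ S
    · simp [extS, h, hu']
    · simp [extS, h, hν'0 i h]
  have hBu' : gB ω S u' = fun i => b i.1 := by
    funext i
    show gL ω (extS S u') i.1 = b i.1
    rw [heu']
    have h1 : (gdeg ω i.1) ^ (-r) * gL ω ν' i.1 = 1 := hν'lap i.1 i.2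
    calc gL ω ν' i.1 = ((gdeg ω i.1) ^ (-r) * (gdeg ω i.1) ^ r) * gL ω ν' i.1 := by
          rw [hcancel i.1]; ring
      _ = (gdeg ω i.1) ^ r * ((gdeg ω i.1) ^ (-r) * gL ω ν' i.1) := by ring
      _ = b i.1 := by rw [h1, hb]; ring
  have : u' = u := hinj (by rw [hBu', hu])
  rw [← heu', this, ← hν]
end

section
/- Monotonicity of equilibrium measures: if R ⊆ S are proper subsets of V, and ν^R, ν^S are the equilibrium measures solving Δν = 1 on the respective set and ν = 0 on the complement, then ν^S_i ≥ ν^R_i for all i ∈ V. -/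
open Finset

/-- Monotonicity of equilibrium measures: R ⊆ S proper subsets implies ν^R ≤ ν^S. -/
theorem equilibrium_measure_monotone {V : Type*} [Fintype V] (ω : V → V → ℝ) (r : ℝ)
    (hsym : ∀ i j, ω i j = ω j i) (hnn : ∀ i j, 0 ≤ ω i j) (hloop : ∀ i, ω i i = 0)
    (hconn : GConn ω) (hcard : 2 ≤ Fintype.card V) (hr0 : 0 ≤ r) (hr1 : r ≤ 1)
    (R S : Set V) (hRS : R ⊆ S) (hS : S ≠ Set.univ)
    (νR νS : V → ℝ)
    (hR1 : ∀ i ∈ R, gLap ω r νR i = 1) (hR2 : ∀ i ∉ R, νR i = 0) (hR3 : ∀ i, 0 ≤ νR i)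
    (hS1 : ∀ i ∈ S, gLap ω r νS i = 1) (hS2 : ∀ i ∉ S, νS i = 0) (hS3 : ∀ i, 0 ≤ νS i) :
    ∀ i, νR i ≤ νS i := by
  -- degree positivity
  have hdeg : ∀ i : V, 0 < gdeg ω i := by
    intro i
    obtain ⟨j, hj⟩ := Fintype.exists_ne_of_one_lt_card (by omega) i
    obtain ⟨c, hc, -⟩ := (Relation.ReflTransGen.cases_head (hconn i j)).resolve_left
      (fun h => hj (h.symm)) |>.imp (fun c h => h)
    exact lt_of_lt_of_le hc (Finset.single_le_sum (fun k _ => hnn i k) (mem_univ c))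
  intro i
  by_contra hcon
  push_neg at hcon
  set u : V → ℝ := fun j => νR j - νS j with hu
  obtain ⟨i₀, -, hmax⟩ := Finset.exists_max_image (univ : Finset V) u ⟨i, mem_univ i⟩
  set M := u i₀ with hM
  have hMpos : 0 < M := lt_of_lt_of_le (by simp [hu]; linarith) (hmax i (mem_univ i))
  -- propagation step
  have step : ∀ a b : V, u a = M → 0 < ω a b → u b = M := by
    intro a b ha hab
    have haR : a ∈ R := by
      by_contra haR
      have : u a ≤ 0 := by simp [hu, hR2 a haR]; exact hS3 a
      linarith [ha ▸ this]
    have hLR := hR1 a haR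
    have hLS := hS1 a (hRS haR)
    have hpow : 0 < (gdeg ω a) ^ (-r) := Real.rpow_pos_of_pos (hdeg a) _
    have hsum : ∑ j, ω a j * (u a - u j) = 0 := by
      have hsplit : ∑ j, ω a j * (u a - u j)
          = (∑ j, ω a j * (νR a - νR j)) - ∑ j, ω a j * (νS a - νS j) := by
        rw [← Finset.sum_sub_distrib]
        exact Finset.sum_congr rfl (fun j _ => by simp [hu]; ring)
      have h1 : (gdeg ω a) ^ (-r) * ∑ j, ω a j * (νR a - νR j) = 1 := hLR
      have h2 : (gdeg ω a) ^ (-r) * ∑ j, ω a j * (νS a - νS j) = 1 := hLS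
      have : (gdeg ω a) ^ (-r) * ∑ j, ω a j * (u a - u j) = 0 := by
        rw [hsplit, mul_sub, h1, h2, sub_self]
      exact (mul_eq_zero.mp this).resolve_left (ne_of_gt hpow)
    have hterm : ∀ j ∈ (univ : Finset V), 0 ≤ ω a j * (u a - u j) := by
      intro j _
      have : u j ≤ M := hmax j (mem_univ j)
      have : 0 ≤ u a - u j := by rw [ha]; linarith
      exact mul_nonneg (hnn a j) this
    have hzero := (Finset.sum_eq_zero_iff_of_nonneg hterm).mp hsum b (mem_univ b)
    have : u a - u b = 0 := by
      rcases mul_eq_zero.mp hzero with h | h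
      · exact absurd h (ne_of_gt hab)
      · exact h
    linarith [ha ▸ this]
  -- propagate along a chain to a point outside S
  obtain ⟨k, hk⟩ : ∃ k, k ∉ S := by
    by_contra h
    push_neg at h
    exact hS (Set.eq_univ_of_forall h)
  have hchain : ∀ b : V, Relation.ReflTransGen (fun a b => 0 < ω a b) i₀ b → u b = M := by
    intro b h
    induction h with
    | refl => rfl
    | tail _ hcb ih => exact step _ _ ih hcb
  have huk : u k = M := hchain k (hconn i₀ k)
  have : u k = 0 := by simp [hu, hR2 k (fun hkR => hk (hRS hkR)), hS2 k hk]
  linarith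
end

section
/- On a bipartite graph with parts V₁, V₂, if S ⊆ V₁, then the equilibrium measure for S is given explicitly by ν^S_i = d_i^{r−1} if i ∈ S and ν^S_i = 0 otherwise. -/
open Finset

/- On a bipartite graph, the equilibrium measure of a subset of one part is
ν^S_i = d_i^(r-1) on S and 0 off S. -/
open Classical in
theorem equilibrium_measure_bipartite {V : Type*} [Fintype V] (ω : V → V → ℝ) (r : ℝ)
    (hsym : ∀ i j, ω i j = ω j i) (hnn : ∀ i j, 0 ≤ ω i j) (hloop : ∀ i, ω i i = 0)
    (hconn : GConn ω) (hcard : 2 ≤ Fintype.card V) (hr0 : 0 ≤ r) (hr1 : r ≤ 1)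
    (V1 V2 : Set V)
    (hcover : ∀ i, i ∈ V1 ∨ i ∈ V2) (hdisj : ∀ i, ¬(i ∈ V1 ∧ i ∈ V2))
    (hbip1 : ∀ i ∈ V1, ∀ j ∈ V1, ω i j = 0) (hbip2 : ∀ i ∈ V2, ∀ j ∈ V2, ω i j = 0)
    (S : Set V) (hSV1 : S ⊆ V1) :
    ((∀ i ∈ S, gLap ω r (fun k => if k ∈ S then (gdeg ω k) ^ (r - 1) else 0) i = 1) ∧
     (∀ i ∉ S, (if i ∈ S then (gdeg ω i) ^ (r - 1) else (0:ℝ)) = 0) ∧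
     (∀ i, (0:ℝ) ≤ if i ∈ S then (gdeg ω i) ^ (r - 1) else 0)) ∧
    (∀ ν : V → ℝ,
      ((∀ i ∈ S, gLap ω r ν i = 1) ∧ (∀ i ∉ S, ν i = 0) ∧ (∀ i, 0 ≤ ν i)) →
      ν = fun k => if k ∈ S then (gdeg ω k) ^ (r - 1) else 0) := by
  classical
  have hdeg : ∀ i : V, 0 < gdeg ω i := by
    intro i
    obtain ⟨j, hj⟩ : ∃ j : V, j ≠ i := Fintype.exists_ne_of_one_lt_card hcard i
    rcases (hconn i j).cases_head with h | ⟨k, hik, _⟩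
    · exact absurd h.symm hj
    · exact Finset.sum_pos' (fun m _ => hnn i m) ⟨k, Finset.mem_univ k, hik⟩
  have key : ∀ (u : V → ℝ), (∀ j, j ∉ S → u j = 0) → ∀ i ∈ S,
      ∑ j, ω i j * (u i - u j) = u i * gdeg ω i := by
    intro u hu i hi
    have hterm : ∀ j : V, ω i j * (u i - u j) = ω i j * u i := by
      intro j
      by_cases hj : j ∈ S
      · have : ω i j = 0 := hbip1 i (hSV1 hi) j (hSV1 hj)
        simp [this]
      · rw [hu j hj]; ring
    rw [Finset.sum_congr rfl (fun j _ => hterm j), ← Finset.sum_mul, mul_comm]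
    rfl
  have huniq : ∀ ν : V → ℝ,
      ((∀ i ∈ S, gLap ω r ν i = 1) ∧ (∀ i ∉ S, ν i = 0) ∧ (∀ i, 0 ≤ ν i)) →
      ν = fun k => if k ∈ S then (gdeg ω k) ^ (r - 1) else 0 := by
    intro ν ⟨h1, h2, _⟩
    funext k
    by_cases hk : k ∈ S
    · simp only [if_pos hk]
      have hd := hdeg k
      have heq : (gdeg ω k) ^ (-r) * (ν k * gdeg ω k) = 1 := by
        have := h1 k hk
        rwa [gLap, key ν h2 k hk] at this
      have h3 : ν k * (gdeg ω k) ^ (1 - r) = 1 := by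
        calc ν k * (gdeg ω k) ^ (1 - r)
            = ν k * ((gdeg ω k) ^ (1:ℝ) * (gdeg ω k) ^ (-r)) := by
              rw [← Real.rpow_add hd]; ring_nf
          _ = (gdeg ω k) ^ (-r) * (ν k * gdeg ω k) := by
              rw [Real.rpow_one]; ring
          _ = 1 := heq
      have h4 : ν k = ((gdeg ω k) ^ (1 - r))⁻¹ := eq_inv_of_mul_eq_one_left h3
      rw [h4, ← Real.rpow_neg hd.le, neg_sub]
    · simp only [if_neg hk]
      exact h2 k hk
  refine ⟨⟨?_, fun i hi => if_neg hi, ?_⟩, huniq⟩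
  · intro i hi
    have hd := hdeg i
    rw [gLap, key (fun k => if k ∈ S then gdeg ω k ^ (r - 1) else 0) (fun j hj => if_neg hj) i hi, if_pos hi]
    calc (gdeg ω i) ^ (-r) * ((gdeg ω i) ^ (r - 1) * gdeg ω i)
        = ((gdeg ω i) ^ (-r) * (gdeg ω i) ^ (r - 1)) * gdeg ω i := by ring
      _ = (gdeg ω i) ^ (-r + (r - 1)) * gdeg ω i := by rw [Real.rpow_add hd]
      _ = (gdeg ω i) ^ (-1 : ℝ) * gdeg ω i := by rw [show -r + (r - 1) = (-1:ℝ) by ring]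
      _ = 1 := by rw [Real.rpow_neg_one]; exact inv_mul_cancel₀ hd.ne'
  · intro i
    by_cases hi : i ∈ S
    · simp only [if_pos hi]
      exact (Real.rpow_pos_of_pos (hdeg i) _).le
    · simp [if_neg hi]
end

section
/- On an unweighted star graph with n ≥ 3 nodes (centre node 1, leaves 2,…,n), the equilibrium measure for V \ {j} with j ≠ 1 is: ν_j = 0, ν_1 = (n−1)^r + n − 2, and ν_i = (n−1)^r + n − 1 for every leaf i with i ≠ j. -/
open Finset

/-- Edge weights of the unweighted star graph on Fin n with centre node 0. -/
noncomputable def starW (n : ℕ) [NeZero n] : Fin n → Fin n → ℝ :=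
  fun i j => if i ≠ j ∧ (i = 0 ∨ j = 0) then 1 else 0

/-- Candidate equilibrium measure for V \ {j} on the star graph, j a leaf. -/
noncomputable def starNu (n : ℕ) [NeZero n] (r : ℝ) (j : Fin n) : Fin n → ℝ :=
  fun i => if i = j then 0 else if i = 0 then ((n:ℝ) - 1) ^ r + (n:ℝ) - 2
           else ((n:ℝ) - 1) ^ r + (n:ℝ) - 1

section helpers
variable (n : ℕ) [NeZero n]

lemma starW_zero (k : Fin n) : starW n 0 k = if k = 0 then 0 else 1 := by
  unfold starW
  by_cases h : k = 0 <;> simp [h, Ne, eq_comm]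

lemma starW_leaf (i : Fin n) (hi : i ≠ 0) (k : Fin n) :
    starW n i k = if k = 0 then 1 else 0 := by
  unfold starW
  by_cases h : k = 0 <;> simp [h, hi]

lemma gdeg_star_zero : gdeg (starW n) 0 = (n : ℝ) - 1 := by
  unfold gdeg
  have h : ∀ k : Fin n, starW n 0 k = 1 - (if k = 0 then (1:ℝ) else 0) := by
    intro k; rw [starW_zero]; split_ifs <;> ring
  simp_rw [h]
  rw [Finset.sum_sub_distrib, Finset.sum_const, Finset.sum_ite_eq' univ (0 : Fin n) (fun _ => (1:ℝ))]
  simp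

lemma gdeg_star_leaf (i : Fin n) (hi : i ≠ 0) : gdeg (starW n) i = 1 := by
  unfold gdeg
  rw [Finset.sum_congr rfl (fun k _ => starW_leaf n i hi k),
    Finset.sum_ite_eq' univ (0 : Fin n) (fun _ => (1:ℝ))]
  simp

lemma gLap_star_leaf (r : ℝ) (u : Fin n → ℝ) (i : Fin n) (hi : i ≠ 0) :
    gLap (starW n) r u i = u i - u 0 := by
  unfold gLap
  rw [gdeg_star_leaf n i hi, Real.one_rpow, one_mul,
    Finset.sum_congr rfl (fun k _ => by rw [starW_leaf n i hi k])]
  simp_rw [ite_mul, one_mul, zero_mul]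
  rw [Finset.sum_ite_eq' univ (0 : Fin n) (fun k => u i - u k)]
  simp

lemma gLap_star_zero (r : ℝ) (u : Fin n → ℝ) :
    gLap (starW n) r u 0 = ((n:ℝ) - 1) ^ (-r) * ∑ k, (if k = 0 then 0 else u 0 - u k) := by
  unfold gLap
  rw [gdeg_star_zero]
  congr 1
  refine Finset.sum_congr rfl fun k _ => ?_
  rw [starW_zero]
  split_ifs <;> ring

lemma starSum_key (hn : 3 ≤ n) (j : Fin n) (hj : j ≠ 0) (u : Fin n → ℝ)
    (hjv : u j = 0) (hleaf : ∀ i, i ≠ 0 → i ≠ j → u i = u 0 + 1) :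
    ∑ k, (if k = 0 then (0:ℝ) else u 0 - u k) = u 0 - ((n:ℝ) - 2) := by
  classical
  have hsub : ({0, j} : Finset (Fin n)) ⊆ univ := subset_univ _
  rw [← Finset.sum_sdiff hsub]
  have h1 : ∑ k ∈ ({0, j} : Finset (Fin n)), (if k = 0 then (0:ℝ) else u 0 - u k) = u 0 := by
    rw [Finset.sum_pair (Ne.symm hj)]
    simp [hj, hjv]
  have hcard : ((univ \ ({0, j} : Finset (Fin n))).card : ℝ) = (n:ℝ) - 2 := by
    rw [Finset.card_sdiff_of_subset hsub, Finset.card_univ, Fintype.card_fin]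
    have h2 : ({0, j} : Finset (Fin n)).card = 2 := by
      rw [Finset.card_insert_of_notMem (by simp [Ne.symm hj]), Finset.card_singleton]
    rw [h2, Nat.cast_sub (by omega)]
    norm_num
  have h2 : ∑ k ∈ univ \ ({0, j} : Finset (Fin n)), (if k = 0 then (0:ℝ) else u 0 - u k)
      = -((n:ℝ) - 2) := by
    have hc : ∀ k ∈ univ \ ({0, j} : Finset (Fin n)),
        (if k = 0 then (0:ℝ) else u 0 - u k) = -1 := by
      intro k hk
      simp only [Finset.mem_sdiff, Finset.mem_univ, Finset.mem_insert, Finset.mem_singleton,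
        true_and, not_or] at hk
      obtain ⟨hk0, hkj⟩ := hk
      rw [if_neg hk0, hleaf k hk0 hkj]
      ring
    rw [Finset.sum_congr rfl hc, Finset.sum_const, nsmul_eq_mul, hcard]
    ring
  rw [h1, h2]
  ring

end helpers

/-- Equilibrium measure for V \ {j}, j ≠ centre, on the unweighted star graph. -/
theorem star_equilibrium_measure (n : ℕ) [NeZero n] (hn : 3 ≤ n)
    (r : ℝ) (hr0 : 0 ≤ r) (hr1 : r ≤ 1) (j : Fin n) (hj : j ≠ 0) :
    ((∀ i, i ≠ j → gLap (starW n) r (starNu n r j) i = 1) ∧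
      starNu n r j j = 0 ∧ (∀ i, 0 ≤ starNu n r j i)) ∧
    (∀ ν : Fin n → ℝ,
      ((∀ i, i ≠ j → gLap (starW n) r ν i = 1) ∧ ν j = 0 ∧ (∀ i, 0 ≤ ν i)) →
      ν = starNu n r j) := by
  have hn3 : (3:ℝ) ≤ (n:ℝ) := by exact_mod_cast hn
  have hpos : (0:ℝ) < (n:ℝ) - 1 := by linarith
  set A : ℝ := ((n:ℝ) - 1) ^ r with hA
  have hA0 : 0 ≤ A := Real.rpow_nonneg hpos.le r
  have hkey : ((n:ℝ) - 1) ^ (-r) * A = 1 := by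
    rw [hA, ← Real.rpow_add hpos]; simp
  have hν0 : starNu n r j 0 = A + (n:ℝ) - 2 := by simp [starNu, Ne.symm hj, hA]
  have hνj : starNu n r j j = 0 := by simp [starNu]
  have hνleaf : ∀ i : Fin n, i ≠ 0 → i ≠ j → starNu n r j i = A + (n:ℝ) - 1 := by
    intro i h0 hj'; simp [starNu, h0, hj', hA]
  have hleaf' : ∀ i : Fin n, i ≠ 0 → i ≠ j → starNu n r j i = starNu n r j 0 + 1 := by
    intro i h0 hj'; rw [hνleaf i h0 hj', hν0]; ring
  constructor
  · refine ⟨?_, hνj, ?_⟩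
    · intro i hij
      by_cases hi0 : i = 0
      · subst hi0
        rw [gLap_star_zero, starSum_key n hn j hj _ hνj hleaf', hν0]
        have heq : A + (n:ℝ) - 2 - ((n:ℝ) - 2) = A := by ring
        rw [heq]; exact hkey
      · rw [gLap_star_leaf n r _ i hi0, hleaf' i hi0 hij]; ring
    · intro i
      by_cases h1 : i = j
      · simp [starNu, h1]
      by_cases h0 : i = 0
      · rw [h0, hν0]; linarith
      · rw [hνleaf i h0 h1]; linarith
  · rintro ν ⟨hlap, hνj', -⟩
    have hl : ∀ i : Fin n, i ≠ 0 → i ≠ j → ν i = ν 0 + 1 := by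
      intro i h0 hij
      have h := hlap i hij
      rw [gLap_star_leaf n r ν i h0] at h
      linarith
    have h0 : ν 0 = A + (n:ℝ) - 2 := by
      have h := hlap 0 (Ne.symm hj)
      rw [gLap_star_zero, starSum_key n hn j hj ν hνj' hl] at h
      have hne : ((n:ℝ) - 1) ^ (-r) ≠ 0 := ne_of_gt (Real.rpow_pos_of_pos hpos _)
      have h2 : ((n:ℝ)-1)^(-r) * (ν 0 - ((n:ℝ)-2)) = ((n:ℝ)-1)^(-r) * A := by
        rw [h, hkey]
      have h3 := mul_left_cancel₀ hne h2
      linarith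
    funext i
    by_cases h1 : i = j
    · rw [h1, hνj', hνj]
    by_cases hi0 : i = 0
    · rw [hi0, h0, hν0]
    · rw [hl i hi0 h1, hνleaf i hi0 h1, h0]; ring
end

section
/- Lower bound for equilibrium measures via curvature: for a proper subset S ⊊ V, letting κ_S be the graph curvature of S (with q = 1) and κ_S^+ = max_{i∈V} (κ_S)_i, the equilibrium measure ν^S satisfies ν^S_i ≥ 1/κ_S^+ for every i ∈ S. -/
open Finset

/- Lower bound for equilibrium measures via the maximal curvature:
ν^S ≥ 1 / κ_S^+ on S. -/
open Classical in
theorem equilibrium_measure_ge_inv_curvature {V : Type*} [Fintype V] (ω : V → V → ℝ) (r : ℝ)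
    (hsym : ∀ i j, ω i j = ω j i) (hnn : ∀ i j, 0 ≤ ω i j) (hloop : ∀ i, ω i i = 0)
    (hconn : GConn ω) (hcard : 2 ≤ Fintype.card V) (hr0 : 0 ≤ r) (hr1 : r ≤ 1)
    (S : Set V) (hS : S ≠ Set.univ) (ν : V → ℝ)
    (h1 : ∀ i ∈ S, gLap ω r ν i = 1) (h2 : ∀ i ∉ S, ν i = 0) (h3 : ∀ i, 0 ≤ ν i) :
    ∀ i ∈ S,
      (⨆ k : V,
        (if k ∈ S then (gdeg ω k) ^ (-r) * ∑ j ∈ Finset.univ.filter (fun j => j ∉ S), ω k j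
         else -((gdeg ω k) ^ (-r) * ∑ j ∈ Finset.univ.filter (fun j => j ∈ S), ω k j)))⁻¹
      ≤ ν i := by
    intro i hi
    set K : V → ℝ := fun k =>
      (if k ∈ S then (gdeg ω k) ^ (-r) * ∑ j ∈ Finset.univ.filter (fun j => j ∉ S), ω k j
       else -((gdeg ω k) ^ (-r) * ∑ j ∈ Finset.univ.filter (fun j => j ∈ S), ω k j)) with hK
    obtain ⟨m, hmS, hmin⟩ := Finset.exists_min_image (Finset.univ.filter (fun j => j ∈ S)) ν
      ⟨i, by simp [hi]⟩
    have hmS' : m ∈ S := by simpa using hmS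
    have hd : 0 ≤ (gdeg ω m) ^ (-r) :=
      Real.rpow_nonneg (Finset.sum_nonneg fun j _ => hnn m j) _
    have hLap : (gdeg ω m) ^ (-r) * ∑ j, ω m j * (ν m - ν j) = 1 := h1 m hmS'
    have hsplit : ∑ j, ω m j * (ν m - ν j) ≤
        (∑ j ∈ Finset.univ.filter (fun j => j ∉ S), ω m j) * ν m := by
      rw [← Finset.sum_filter_add_sum_filter_not Finset.univ (fun j => j ∈ S)]
      have hA : ∑ j ∈ Finset.univ.filter (fun j => j ∈ S), ω m j * (ν m - ν j) ≤ 0 := by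
        apply Finset.sum_nonpos
        intro j hj
        have : ν m ≤ ν j := hmin j (by simpa using (Finset.mem_filter.mp hj).2)
        have := hnn m j
        nlinarith
      have hB : ∑ j ∈ Finset.univ.filter (fun j => ¬ j ∈ S), ω m j * (ν m - ν j)
          = (∑ j ∈ Finset.univ.filter (fun j => j ∉ S), ω m j) * ν m := by
        rw [Finset.sum_mul]
        apply Finset.sum_congr rfl
        intro j hj
        rw [h2 j (by simpa using (Finset.mem_filter.mp hj).2)]
        ring
      linarith
    have h1le : (1:ℝ) ≤ K m * ν m := by
      have hKm : K m = (gdeg ω m) ^ (-r) * ∑ j ∈ Finset.univ.filter (fun j => j ∉ S), ω m j := by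
        simp [hK, hmS']
      calc (1:ℝ) = (gdeg ω m) ^ (-r) * ∑ j, ω m j * (ν m - ν j) := hLap.symm
        _ ≤ (gdeg ω m) ^ (-r) *
            ((∑ j ∈ Finset.univ.filter (fun j => j ∉ S), ω m j) * ν m) :=
          mul_le_mul_of_nonneg_left hsplit hd
        _ = K m * ν m := by rw [hKm]; ring
    have hKle : K m ≤ ⨆ k, K k := le_ciSup (Set.finite_range K).bddAbove m
    have hνm : 0 ≤ ν m := h3 m
    have hkey : (1:ℝ) ≤ (⨆ k, K k) * ν m :=
      le_trans h1le (mul_le_mul_of_nonneg_right hKle hνm)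
    have hκ : 0 < ⨆ k, K k := by nlinarith
    have hinv : (⨆ k, K k)⁻¹ ≤ ν m := by
      rw [inv_eq_one_div, div_le_iff₀ hκ]
      nlinarith
    exact le_trans hinv (hmin i (by simp [hi]))
end

section
/- The Green's function for the graph Poisson equation defined by G_{ij} = (1/vol V)(ν^{V\{k}}_i + ν^{V\{j}}_k − ν^{V\{j}}_i) satisfies, for all i, j ∈ V: (Δ G^j)_i = d_j^{-r} δ_{ij} − d_k^{-r} δ_{ik}, and G^j_k = 0, where G^j denotes the function i ↦ G_{ij}. -/
open Finset

section Aux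

variable {V : Type*} [Fintype V]

lemma aux_deg_pos (ω : V → V → ℝ)
    (hnn : ∀ i j, 0 ≤ ω i j) (hconn : GConn ω) (hcard : 2 ≤ Fintype.card V) (i : V) :
    0 < gdeg ω i := by
  obtain ⟨j, hj⟩ := Fintype.exists_ne_of_one_lt_card (by omega) i
  rcases (hconn i j).cases_head with he | ⟨a, ha, _⟩
  · exact absurd he hj.symm
  · exact lt_of_lt_of_le ha (Finset.single_le_sum (fun m _ => hnn i m) (Finset.mem_univ a))

lemma aux_mass_zero (ω : V → V → ℝ) (r : ℝ)
    (hsym : ∀ i j, ω i j = ω j i) (hd : ∀ i, 0 < gdeg ω i) (u : V → ℝ) :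
    ∑ i, (gdeg ω i) ^ r * gLap ω r u i = 0 := by
  have h1 : ∀ i : V, (gdeg ω i) ^ r * gLap ω r u i = ∑ m, ω i m * (u i - u m) := by
    intro i
    rw [gLap, Real.rpow_neg (hd i).le, ← mul_assoc,
      mul_inv_cancel₀ (ne_of_gt (Real.rpow_pos_of_pos (hd i) r)), one_mul]
  simp only [h1]
  have h2 : ∑ i : V, ∑ m : V, ω i m * (u i - u m)
      = (∑ i : V, ∑ m : V, ω i m * u i) - ∑ i : V, ∑ m : V, ω i m * u m := by
    simp [mul_sub, Finset.sum_sub_distrib]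
  rw [h2, sub_eq_zero, Finset.sum_comm (f := fun i m => ω i m * u m)]
  exact Finset.sum_congr rfl fun a _ => Finset.sum_congr rfl fun b _ => by rw [hsym a b]

lemma aux_lin (ω : V → V → ℝ) (r : ℝ) (f g : V → ℝ) (c A : ℝ) (i : V) :
    gLap ω r (fun x => c * (f x + A - g x)) i
      = c * (gLap ω r f i - gLap ω r g i) := by
  simp only [gLap]
  rw [show (∑ m, ω i m * (c * (f i + A - g i) - c * (f m + A - g m)))
      = c * ((∑ m, ω i m * (f i - f m)) - ∑ m, ω i m * (g i - g m)) by
    rw [← Finset.sum_sub_distrib, Finset.mul_sum]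
    exact Finset.sum_congr rfl fun m _ => by ring]
  ring

end Aux

/-- The Green's function for the graph Poisson equation built from equilibrium measures
satisfies (ΔG^j)_i = d_j^{-r} δ_{ij} − d_k^{-r} δ_{ik} and G^j_k = 0. -/
theorem poisson_green_function {V : Type*} [Fintype V] [DecidableEq V]
    (ω : V → V → ℝ) (r : ℝ)
    (hsym : ∀ i j, ω i j = ω j i) (hnn : ∀ i j, 0 ≤ ω i j) (hloop : ∀ i, ω i i = 0)
    (hconn : GConn ω) (hcard : 2 ≤ Fintype.card V) (hr0 : 0 ≤ r) (hr1 : r ≤ 1)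
    (k : V) (ν : V → V → ℝ)
    (hν : ∀ j : V, (∀ i, i ≠ j → gLap ω r (ν j) i = 1) ∧ ν j j = 0 ∧ (∀ i, 0 ≤ ν j i)) :
    (∀ j i : V,
      gLap ω r (fun i' => (∑ l, (gdeg ω l) ^ r)⁻¹ * (ν k i' + ν j k - ν j i')) i =
        (gdeg ω j) ^ (-r) * (if i = j then 1 else 0) -
        (gdeg ω k) ^ (-r) * (if i = k then 1 else 0)) ∧
    (∀ j : V, (∑ l, (gdeg ω l) ^ r)⁻¹ * (ν k k + ν j k - ν j k) = 0) := by
  have hd : ∀ i, 0 < gdeg ω i := aux_deg_pos ω hnn hconn hcard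
  set vol := ∑ l, (gdeg ω l) ^ r with hvoldef
  have hne : Nonempty V := Fintype.card_pos_iff.mp (by omega)
  have hvol : 0 < vol := Finset.sum_pos (fun l _ => Real.rpow_pos_of_pos (hd l) r)
    Finset.univ_nonempty
  have hLjj : ∀ j : V, gLap ω r (ν j) j = 1 - (gdeg ω j) ^ (-r) * vol := by
    intro j
    have hm := aux_mass_zero ω r hsym hd (ν j)
    rw [← Finset.add_sum_erase _ _ (Finset.mem_univ j)] at hm
    have he : ∑ i ∈ Finset.univ.erase j, (gdeg ω i) ^ r * gLap ω r (ν j) i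
        = ∑ i ∈ Finset.univ.erase j, (gdeg ω i) ^ r := by
      refine Finset.sum_congr rfl fun i hi => ?_
      rw [(hν j).1 i (Finset.mem_erase.mp hi).1, mul_one]
    rw [he, Finset.sum_erase_eq_sub (Finset.mem_univ j)] at hm
    have hpos : (0:ℝ) < (gdeg ω j) ^ r := Real.rpow_pos_of_pos (hd j) r
    have : gLap ω r (ν j) j = ((gdeg ω j) ^ r - vol) / (gdeg ω j) ^ r := by
      field_simp
      linarith [hm]
    rw [this, Real.rpow_neg (hd j).le]
    field_simp
  constructor
  · intro j i
    rw [aux_lin]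
    by_cases hij : i = j
    · subst hij
      by_cases hik : i = k
      · subst hik
        simp
      · rw [(hν k).1 i hik, hLjj i]
        simp only [if_pos rfl, if_neg hik, mul_one, mul_zero, sub_zero]
        field_simp
        simp only [if_true, mul_one]; ring
    · by_cases hik : i = k
      · subst hik
        rw [hLjj i, (hν j).1 i hij]
        simp only [if_neg hij, if_pos rfl, mul_one, mul_zero, zero_sub]
        field_simp
        simp only [if_true, mul_one]; ring
      · rw [(hν k).1 i hik, (hν j).1 i hij]
        simp [if_neg hij, if_neg hik]
  · intro j
    simp [(hν k).2.1]
end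

section
/- Symmetry of the Poisson Green's function: the Green's function G for the graph Poisson equation satisfying (ΔG^j)_i = d_j^{-r}δ_{ij} − d_k^{-r}δ_{ik} and G^j_k = 0 is symmetric: G_{ij} = G_{ji} for all i, j ∈ V. Equivalently, (1/vol V)(ν^{V\{k}}_i + ν^{V\{j}}_k − ν^{V\{j}}_i) is symmetric in i and j. -/
open Finset

lemma deg_mul_lap {V : Type*} [Fintype V] (ω : V → V → ℝ) (r : ℝ)
    (hd : ∀ i, 0 < gdeg ω i) (u : V → ℝ) (i : V) :
    (gdeg ω i) ^ r * gLap ω r u i = ∑ j, ω i j * (u i - u j) := by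
  unfold gLap
  rw [Real.rpow_neg (hd i).le, ← mul_assoc,
    mul_inv_cancel₀ (ne_of_gt (Real.rpow_pos_of_pos (hd i) r)), one_mul]

/-- The weighted total mass of the Laplacian of any function vanishes. -/
lemma lap_mass_zero {V : Type*} [Fintype V] (ω : V → V → ℝ) (r : ℝ)
    (hsym : ∀ i j, ω i j = ω j i) (hd : ∀ i, 0 < gdeg ω i) (u : V → ℝ) :
    ∑ i, (gdeg ω i) ^ r * gLap ω r u i = 0 := by
  simp_rw [deg_mul_lap ω r hd u, mul_sub, Finset.sum_sub_distrib]
  have : ∑ i, ∑ j, ω i j * u j = ∑ i, ∑ j, ω i j * u i := by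
    rw [Finset.sum_comm]
    simp_rw [fun i j => hsym j i]
  rw [this, sub_self]

/-- The Laplacian is self-adjoint with respect to the weighted inner product. -/
lemma lap_selfadj {V : Type*} [Fintype V] (ω : V → V → ℝ) (r : ℝ)
    (hsym : ∀ i j, ω i j = ω j i) (hd : ∀ i, 0 < gdeg ω i) (u v : V → ℝ) :
    ∑ i, (gdeg ω i) ^ r * gLap ω r u i * v i =
    ∑ i, (gdeg ω i) ^ r * gLap ω r v i * u i := by
  have h : ∀ w x : V → ℝ, ∑ i, (gdeg ω i) ^ r * gLap ω r w i * x i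
      = (∑ i, ∑ j, ω i j * w i * x i) - ∑ i, ∑ j, ω i j * w j * x i := by
    intro w x
    have : ∀ i, (gdeg ω i) ^ r * gLap ω r w i * x i
        = (∑ j, ω i j * w i * x i) - ∑ j, ω i j * w j * x i := by
      intro i
      rw [deg_mul_lap ω r hd w i, Finset.sum_mul, ← Finset.sum_sub_distrib]
      exact Finset.sum_congr rfl (fun j _ => by ring)
    simp_rw [this, Finset.sum_sub_distrib]
  rw [h, h]
  have h1 : ∑ i, ∑ j, ω i j * u i * v i = ∑ i, ∑ j, ω i j * v i * u i :=
    Finset.sum_congr rfl fun i _ => Finset.sum_congr rfl fun j _ => by ring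
  have h2 : ∑ i, ∑ j, ω i j * u j * v i = ∑ i, ∑ j, ω i j * v j * u i := by
    rw [Finset.sum_comm]
    exact Finset.sum_congr rfl fun i _ => Finset.sum_congr rfl fun j _ => by
      rw [hsym j i]; ring
  rw [h1, h2]

/-- If `Δu = 1` off the node `a`, then `⟨Δu, v⟩ = gMass v − vol · v a`. -/
lemma sum_lap_eq {V : Type*} [Fintype V] [DecidableEq V] (ω : V → V → ℝ) (r : ℝ)
    (hsym : ∀ i j, ω i j = ω j i) (hd : ∀ i, 0 < gdeg ω i) (u : V → ℝ) (a : V)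
    (hA : ∀ i, i ≠ a → gLap ω r u i = 1) (v : V → ℝ) :
    ∑ i, (gdeg ω i) ^ r * gLap ω r u i * v i
      = gMass ω r v - (∑ l, (gdeg ω l) ^ r) * v a := by
  have hmass := lap_mass_zero ω r hsym hd u
  have hsplit := Finset.sum_erase_add Finset.univ
    (fun i => (gdeg ω i) ^ r * gLap ω r u i) (Finset.mem_univ a)
  have h2 : ∑ i ∈ Finset.univ.erase a, (gdeg ω i) ^ r * gLap ω r u i
      = ∑ i ∈ Finset.univ.erase a, (gdeg ω i) ^ r :=
    Finset.sum_congr rfl (fun i hi => by rw [hA i (Finset.ne_of_mem_erase hi)]; ring)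
  have h5 : ∑ i ∈ Finset.univ.erase a, (gdeg ω i) ^ r
      = (∑ l, (gdeg ω l) ^ r) - (gdeg ω a) ^ r := by
    rw [← Finset.sum_erase_add Finset.univ (fun l => (gdeg ω l) ^ r) (Finset.mem_univ a)]
    ring
  have key : (gdeg ω a) ^ r * gLap ω r u a
      = -((∑ l, (gdeg ω l) ^ r) - (gdeg ω a) ^ r) := by
    rw [hmass] at hsplit
    rw [h2, h5] at hsplit
    beta_reduce at hsplit
    linarith
  rw [← Finset.sum_erase_add Finset.univ
    (fun i => (gdeg ω i) ^ r * gLap ω r u i * v i) (Finset.mem_univ a)]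
  have h3 : ∑ i ∈ Finset.univ.erase a, (gdeg ω i) ^ r * gLap ω r u i * v i
      = ∑ i ∈ Finset.univ.erase a, (gdeg ω i) ^ r * v i :=
    Finset.sum_congr rfl (fun i hi => by rw [hA i (Finset.ne_of_mem_erase hi)]; ring)
  have h4 : ∑ i ∈ Finset.univ.erase a, (gdeg ω i) ^ r * v i
      = gMass ω r v - (gdeg ω a) ^ r * v a := by
    rw [gMass, ← Finset.sum_erase_add Finset.univ
      (fun i => (gdeg ω i) ^ r * v i) (Finset.mem_univ a)]
    ring
  rw [h3, h4, key]
  ring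

/-- Symmetry of the Poisson Green's function:
(1/vol V)(ν^{V∖k}_i + ν^{V∖j}_k − ν^{V∖j}_i) is symmetric in i and j. -/
theorem poisson_green_function_symm {V : Type*} [Fintype V] (ω : V → V → ℝ) (r : ℝ)
    (hsym : ∀ i j, ω i j = ω j i) (hnn : ∀ i j, 0 ≤ ω i j) (hloop : ∀ i, ω i i = 0)
    (hconn : GConn ω) (hcard : 2 ≤ Fintype.card V) (hr0 : 0 ≤ r) (hr1 : r ≤ 1)
    (k : V) (ν : V → V → ℝ)
    (hν : ∀ j : V, (∀ i, i ≠ j → gLap ω r (ν j) i = 1) ∧ ν j j = 0 ∧ (∀ i, 0 ≤ ν j i)) :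
    ∀ i j : V,
      (∑ l, (gdeg ω l) ^ r)⁻¹ * (ν k i + ν j k - ν j i) =
      (∑ l, (gdeg ω l) ^ r)⁻¹ * (ν k j + ν i k - ν i j) := by
  classical
  have hd : ∀ i, 0 < gdeg ω i := gdeg_pos ω hnn hconn hcard
  have hne : Nonempty V := Fintype.card_pos_iff.mp (by omega)
  have hvol : 0 < ∑ l, (gdeg ω l) ^ r :=
    Finset.sum_pos (fun l _ => Real.rpow_pos_of_pos (hd l) r) Finset.univ_nonempty
  have keysym : ∀ a b : V,
      gMass ω r (ν b) - (∑ l, (gdeg ω l) ^ r) * ν b a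
        = gMass ω r (ν a) - (∑ l, (gdeg ω l) ^ r) * ν a b := by
    intro a b
    have h1 := sum_lap_eq ω r hsym hd (ν a) a (hν a).1 (ν b)
    have h2 := sum_lap_eq ω r hsym hd (ν b) b (hν b).1 (ν a)
    have h3 := lap_selfadj ω r hsym hd (ν a) (ν b)
    linarith
  intro i j
  have hv : (∑ l, (gdeg ω l) ^ r) * (ν k i + ν j k - ν j i)
      = (∑ l, (gdeg ω l) ^ r) * (ν k j + ν i k - ν i j) := by
    linear_combination keysym i j - keysym i k - keysym k j
  have hXY : ν k i + ν j k - ν j i = ν k j + ν i k - ν i j :=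
    mul_left_cancel₀ (ne_of_gt hvol) hv
  rw [hXY]
end

section
/- For any subset S ⊆ V and q = 1, the total variation admits the spectral formulas TV(χ_S) = Σ_{m=1}^{n−1} λ_m ⟨χ_S, φ^m⟩_V² = Σ_{m=1}^{n−1} λ_m^{-1} ⟨κ_S, φ^m⟩_V², where λ_m, φ^m are the nonzero eigenvalues and V-orthonormal eigenfunctions of Δ and κ_S = Δχ_S is the graph curvature of S. -/
open Finset

section Aux

variable {V : Type*} [Fintype V] (ω : V → V → ℝ) (r : ℝ)

lemma gInner_symm (u v : V → ℝ) : gInner ω r u v = gInner ω r v u :=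
  Finset.sum_congr rfl fun i _ => by ring

lemma gInner_sum_left {ι : Type*} [Fintype ι] (c : ι → ℝ) (φ : ι → V → ℝ) (w : V → ℝ) :
    gInner ω r (fun v => ∑ m, c m * φ m v) w = ∑ m, c m * gInner ω r (φ m) w := by
  unfold gInner
  simp only [Finset.sum_mul]
  rw [Finset.sum_comm]
  refine Finset.sum_congr rfl fun m _ => ?_
  rw [Finset.mul_sum]
  exact Finset.sum_congr rfl fun i _ => by ring

lemma gInner_sum_right {ι : Type*} [Fintype ι] (c : ι → ℝ) (φ : ι → V → ℝ) (w : V → ℝ) :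
    gInner ω r w (fun v => ∑ m, c m * φ m v) = ∑ m, c m * gInner ω r w (φ m) := by
  rw [gInner_symm, gInner_sum_left]
  exact Finset.sum_congr rfl fun m _ => by rw [gInner_symm]

lemma gInner_lap (hd : ∀ i, 0 < gdeg ω i) (u w : V → ℝ) :
    gInner ω r (gLap ω r u) w = ∑ i, ∑ j, ω i j * (u i - u j) * w i := by
  unfold gInner gLap
  refine Finset.sum_congr rfl fun i _ => ?_
  have h1 : (gdeg ω i) ^ (-r) * (gdeg ω i) ^ r = 1 := by
    rw [← Real.rpow_add (hd i)]; simp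
  calc ((gdeg ω i) ^ (-r) * ∑ j, ω i j * (u i - u j)) * w i * (gdeg ω i) ^ r
      = ((gdeg ω i) ^ (-r) * (gdeg ω i) ^ r) * ((∑ j, ω i j * (u i - u j)) * w i) := by ring
    _ = (∑ j, ω i j * (u i - u j)) * w i := by rw [h1]; ring
    _ = ∑ j, ω i j * (u i - u j) * w i := by rw [Finset.sum_mul]

lemma swap_sym (hsym : ∀ i j, ω i j = ω j i) (u w : V → ℝ) :
    ∑ i, ∑ j, ω i j * (u i - u j) * w i = ∑ i, ∑ j, ω i j * (w i - w j) * u i := by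
  have hL : ∀ (u w : V → ℝ), ∑ i, ∑ j, ω i j * (u i - u j) * w i
      = (∑ i, ∑ j, ω i j * u i * w i) - ∑ i, ∑ j, ω i j * u j * w i := by
    intro u w
    rw [← Finset.sum_sub_distrib]
    refine Finset.sum_congr rfl fun i _ => ?_
    rw [← Finset.sum_sub_distrib]
    exact Finset.sum_congr rfl fun j _ => by ring
  rw [hL, hL]
  congr 1
  · exact Finset.sum_congr rfl fun i _ => Finset.sum_congr rfl fun j _ => by ring
  · rw [Finset.sum_comm]
    exact Finset.sum_congr rfl fun i _ => Finset.sum_congr rfl fun j _ => by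
      rw [hsym j i]; ring

end Aux

open Classical in
theorem tv_indicator_spectral {V : Type*} [Fintype V] (ω : V → V → ℝ) (r : ℝ)
    (hsym : ∀ i j, ω i j = ω j i) (hnn : ∀ i j, 0 ≤ ω i j) (hloop : ∀ i, ω i i = 0)
    (hconn : GConn ω) (hcard : 2 ≤ Fintype.card V) (hr0 : 0 ≤ r) (hr1 : r ≤ 1)
    (S : Set V)
    {ι : Type*} [Fintype ι] (hcardι : Fintype.card ι = Fintype.card V)
    (lam : ι → ℝ) (φ : ι → V → ℝ) (m0 : ι)
    (horth : ∀ m l, gInner ω r (φ m) (φ l) = if m = l then (1:ℝ) else 0)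
    (heig : ∀ m i, gLap ω r (φ m) i = lam m * φ m i)
    (hm0 : lam m0 = 0)
    (hconst : ∀ i i', φ m0 i = φ m0 i')
    (hpos : ∀ m, m ≠ m0 → 0 < lam m) :
    ((1/2) * ∑ i, ∑ j, ω i j *
        |(if i ∈ S then (1:ℝ) else 0) - (if j ∈ S then (1:ℝ) else 0)| =
      ∑ m ∈ Finset.univ.filter (fun m => m ≠ m0),
        lam m * (gInner ω r (fun k => if k ∈ S then (1:ℝ) else 0) (φ m)) ^ 2) ∧
    ((1/2) * ∑ i, ∑ j, ω i j *
        |(if i ∈ S then (1:ℝ) else 0) - (if j ∈ S then (1:ℝ) else 0)| =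
      ∑ m ∈ Finset.univ.filter (fun m => m ≠ m0),
        (lam m)⁻¹ *
          (gInner ω r (gLap ω r (fun k => if k ∈ S then (1:ℝ) else 0)) (φ m)) ^ 2) := by
  -- positivity of degrees
  have hd : ∀ i, 0 < gdeg ω i := by
    intro i
    obtain ⟨j, hj⟩ := Fintype.exists_ne_of_one_lt_card (by omega) i
    rcases (hconn i j).cases_head with h | ⟨c, hc, -⟩
    · exact absurd h.symm hj
    · refine lt_of_lt_of_le hc ?_
      exact Finset.single_le_sum (fun k _ => hnn i k) (Finset.mem_univ c)
  set χ : V → ℝ := fun k => if k ∈ S then (1:ℝ) else 0 with hχ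
  set a : ι → ℝ := fun m => gInner ω r χ (φ m) with ha
  set b : ι → ℝ := fun m => gInner ω r (gLap ω r χ) (φ m) with hbdef
  -- basis
  have : Nonempty ι := by
    rw [← Fintype.card_pos_iff]; omega
  have hli : LinearIndependent ℝ φ := by
    rw [Fintype.linearIndependent_iff]
    intro g hg l
    have h0 : gInner ω r (fun v => ∑ m, g m * φ m v) (φ l) = 0 := by
      have : (fun v => ∑ m, g m * φ m v) = (0 : V → ℝ) := by
        funext v
        have := congrFun hg v
        simpa using this
      rw [this]
      simp [gInner]
    rw [gInner_sum_left] at h0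
    simpa [horth] using h0
  have hcf : Fintype.card ι = Module.finrank ℝ (V → ℝ) := by
    rw [Module.finrank_pi]; exact hcardι
  set B := basisOfLinearIndependentOfCardEqFinrank hli hcf with hB
  have hBc : ⇑B = φ := coe_basisOfLinearIndependentOfCardEqFinrank hli hcf
  -- expansion of any u
  have hexp : ∀ u : V → ℝ, u = fun v => ∑ m, gInner ω r u (φ m) * φ m v := by
    intro u
    have hrep : ∑ m, B.repr u m • B m = u := B.sum_repr u
    have hufun : u = fun v => ∑ m, B.repr u m * φ m v := by
      conv_lhs => rw [← hrep]
      funext v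
      simp [hBc]
    have hcoef : ∀ l, B.repr u l = gInner ω r u (φ l) := by
      intro l
      conv_rhs => rw [hufun]
      rw [gInner_sum_left]
      simp [horth]
    funext v
    simp only [← hcoef]
    exact congrFun hufun v
  -- self-adjointness
  have hsa : ∀ u w : V → ℝ, gInner ω r (gLap ω r u) w = gInner ω r (gLap ω r w) u := by
    intro u w
    rw [gInner_lap ω r hd, gInner_lap ω r hd, swap_sym ω hsym]
  -- b m = lam m * a m
  have hb : ∀ m, b m = lam m * a m := by
    intro m
    have hlm : gLap ω r (φ m) = fun i => lam m * φ m i := funext fun i => heig m i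
    show gInner ω r (gLap ω r χ) (φ m) = lam m * gInner ω r χ (φ m)
    rw [hsa χ (φ m), hlm]
    unfold gInner
    rw [Finset.mul_sum]
    exact Finset.sum_congr rfl fun i _ => by ring
  -- TV = ⟨χ, Δχ⟩
  have hTV : (1/2) * (∑ i, ∑ j, ω i j * |χ i - χ j|) = gInner ω r χ (gLap ω r χ) := by
    rw [gInner_symm, gInner_lap ω r hd]
    have habs : ∀ i j, ω i j * |χ i - χ j| = ω i j * (χ i - χ j) ^ 2 := by
      intro i j
      simp only [hχ]
      split_ifs <;> norm_num
    have hT : ∑ i, ∑ j, ω i j * (χ i - χ j) * χ i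
        = ∑ i, ∑ j, ω i j * (χ j - χ i) * χ j := by
      rw [Finset.sum_comm]
      exact Finset.sum_congr rfl fun i _ => Finset.sum_congr rfl fun j _ => by
        rw [hsym j i]
    have h2T : ∑ i, ∑ j, ω i j * |χ i - χ j|
        = 2 * ∑ i, ∑ j, ω i j * (χ i - χ j) * χ i := by
      rw [two_mul]
      nth_rewrite 2 [hT]
      rw [← Finset.sum_add_distrib]
      refine Finset.sum_congr rfl fun i _ => ?_
      rw [← Finset.sum_add_distrib]
      refine Finset.sum_congr rfl fun j _ => ?_
      rw [habs]
      ring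
    rw [h2T]
    ring
  -- Parseval
  have hpar : gInner ω r χ (gLap ω r χ) = ∑ m, b m * a m := by
    conv_lhs => rw [hexp (gLap ω r χ)]
    rw [gInner_sum_right]
  have hsum1 : gInner ω r χ (gLap ω r χ)
      = ∑ m ∈ Finset.univ.filter (fun m => m ≠ m0), lam m * a m ^ 2 := by
    rw [hpar]
    rw [Finset.filter_ne' Finset.univ m0]
    rw [Finset.sum_erase Finset.univ (by rw [hm0]; ring)]
    exact Finset.sum_congr rfl fun m _ => by rw [hb]; ring
  constructor
  · rw [hTV, hsum1]
  · rw [hTV, hsum1]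
    refine Finset.sum_congr rfl fun m hm => ?_
    have hmne : m ≠ m0 := (Finset.mem_filter.mp hm).2
    have hl : lam m ≠ 0 := (hpos m hmne).ne'
    show lam m * a m ^ 2 = (lam m)⁻¹ * b m ^ 2
    rw [hb]
    field_simp
end
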